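/- For real α > 0, the inverse of the matrix H_n^{(α)} = (α/(l+j+α))_{0≤l,j≤n} has (l,j)-entry (−1)^{l+j} ((l+j+α)/α) binom(n+l+α, n−j) binom(n+j+α, n−l) binom(l+j+α−1, l) binom(l+j+α−1, j), where binom(x,k) = x(x−1)⋯(x−k+1)/k! denotes the generalized binomial coefficient. -/

import Mathlib

/-- generalized binomial coefficient `binom(x, k) = x(x-1)⋯(x-k+1)/k!` for real `x`. -/
noncomputable def gbinom (x : ℝ) (k : ℕ) : ℝ :=
  (∏ i ∈ Finset.range k, (x - i)) / (Nat.factorial k : ℝ)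

/-!
`H_n^{(α)} = α • C` where `C l j = 1 / (x l - y j)` is the Cauchy matrix of the nodes `x l = l`
and `y j = -(j + α)`. Interpolating `A_m(t) = ∏_{i ≠ m} (t - x i)` at the nodes `y` and evaluating
the barycentric form of the interpolant at `x l` gives `∑_j C l j * D j m = δ l m` for an explicit
`D` built from `A_m(y j)`, `∏_k (x m - y k)` and the nodal weights. For arithmetic nodes all these
products are of the form `∏_{k ≤ n, k ≠ m} (c + k)`, which splits into the two rising factorials
`∏_{k < m} (c + k)` and `∏_{m < k ≤ n} (c + k)`, i.e. into generalized binomial coefficients.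
-/

open Finset Matrix Polynomial Lagrange
open scoped Nat

section Cauchy

variable {K ι : Type*} [Field K] [Fintype ι] [DecidableEq ι]

def cauchyMatrix (x y : ι → K) : Matrix ι ι K :=
  of fun i j => (x i - y j)⁻¹

-- `A_m(y j) * B(x m) / (B'(y j) * A'(x m))`, where `A = ∏ i, (X - x i)`, `A_m = A / (X - x m)`
-- and `B = ∏ k, (X - y k)`.
def cauchyInv (x y : ι → K) : Matrix ι ι K :=
  of fun j m => (∏ i ∈ univ.erase m, (y j - x i)) * (∏ k, (x m - y k)) /
    ((∏ k ∈ univ.erase j, (y j - y k)) * ∏ i ∈ univ.erase m, (x m - x i))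

theorem cauchyInv_apply_eq_nodal (x y : ι → K) (j m : ι) :
    cauchyInv x y j m = nodalWeight univ y j * (nodal (univ.erase m) x).eval (y j) *
      (nodal univ y).eval (x m) / (nodal (univ.erase m) x).eval (x m) := by
  simp only [cauchyInv, of_apply, nodalWeight, eval_nodal, prod_inv_distrib]
  ring

theorem cauchyMatrix_mul_cauchyInv {x y : ι → K} (hx : Function.Injective x)
    (hy : Function.Injective y) (hxy : ∀ i j, x i ≠ y j) :
    cauchyMatrix x y * cauchyInv x y = 1 := by
  ext l m
  set f := nodal (univ.erase m) x
  have hf : f = interpolate univ y fun j => f.eval (y j) := by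
    refine eq_interpolate hy.injOn ?_
    rw [degree_nodal, card_erase_of_mem (mem_univ m)]
    exact_mod_cast Nat.sub_lt (card_pos.mpr ⟨m, mem_univ m⟩) one_pos
  -- barycentric form of the interpolation formula, evaluated at `x l`
  have hfl : f.eval (x l) = (nodal univ y).eval (x l) *
      ∑ j, nodalWeight univ y j * (x l - y j)⁻¹ * f.eval (y j) := by
    conv_lhs => rw [hf]
    exact eval_interpolate_not_at_node _ fun j _ => hxy l j
  have hnodal : ∀ i, (nodal univ y).eval (x i) ≠ 0 := fun i =>
    eval_nodal_not_at_node fun j _ => hxy i j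
  set S := ∑ j, nodalWeight univ y j * (x l - y j)⁻¹ * f.eval (y j)
  have hsum : (cauchyMatrix x y * cauchyInv x y) l m =
      (nodal univ y).eval (x m) / f.eval (x m) * S := by
    simp only [mul_apply, cauchyMatrix, of_apply, cauchyInv_apply_eq_nodal, S, mul_sum]
    exact sum_congr rfl fun j _ => by ring
  rw [hsum, one_apply]
  split_ifs with hlm
  · subst hlm
    have hfl0 : f.eval (x l) ≠ 0 :=
      eval_nodal_not_at_node fun i hi => hx.ne (ne_of_mem_erase hi).symm
    rw [div_mul_eq_mul_div, ← hfl, div_self hfl0]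
  · rw [eval_nodal_at_node (mem_erase.mpr ⟨hlm, mem_univ l⟩), zero_eq_mul] at hfl
    rw [hfl.resolve_left (hnodal l), mul_zero]

end Cauchy

theorem prod_range_succ_erase_eq_mul_prod_Ioc {M : Type*} [CommMonoid M] (f : ℕ → M) {m n : ℕ}
    (hmn : m ≤ n) :
    ∏ k ∈ (range (n + 1)).erase m, f k = (∏ k ∈ range m, f k) * ∏ k ∈ Ioc m n, f k := by
  rw [← prod_union]
  · congr 1; ext k; simp only [mem_erase, mem_range, mem_union, mem_Ioc]; omega
  · exact disjoint_left.mpr fun k hk hk' => by simp only [mem_range, mem_Ioc] at hk hk'; omega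

theorem prod_range_one_add_natCast {R : Type*} [CommSemiring R] (k : ℕ) :
    ∏ i ∈ range k, (1 + (i : R)) = k ! := by
  rw [← prod_range_add_one_eq_factorial, Nat.cast_prod]
  simp_rw [Nat.cast_add_one, add_comm (1 : R)]

theorem prod_fin_erase_neg {R : Type*} [CommRing R] {n : ℕ} (m : Fin (n + 1))
    (f : Fin (n + 1) → R) : ∏ k ∈ univ.erase m, -f k = (-1) ^ n * ∏ k ∈ univ.erase m, f k := by
  rw [prod_neg, card_erase_of_mem (mem_univ m), card_univ, Fintype.card_fin, add_tsub_cancel_right]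

theorem gbinom_mul_factorial (x : ℝ) (k : ℕ) : gbinom x k * k ! = ∏ i ∈ range k, (x - i) :=
  div_mul_cancel₀ _ (by positivity)

theorem prod_range_add_eq_gbinom (c : ℝ) (m : ℕ) :
    ∏ k ∈ range m, (c + k) = gbinom (c + m - 1) m * m ! := by
  rw [gbinom_mul_factorial, ← prod_range_reflect]
  refine prod_congr rfl fun i hi => ?_
  rw [Nat.cast_sub (by grind), Nat.cast_sub (by grind)]
  push_cast; ring

theorem prod_Ioc_add_eq_gbinom (c : ℝ) {m n : ℕ} (hmn : m ≤ n) :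
    ∏ k ∈ Ioc m n, (c + k) = gbinom (c + n) (n - m) * (n - m)! := by
  rw [gbinom_mul_factorial, ← Ico_add_one_add_one_eq_Ioc, prod_Ico_eq_prod_range,
    show n + 1 - (m + 1) = n - m by omega, ← prod_range_reflect]
  refine prod_congr rfl fun i hi => ?_
  rw [mem_range] at hi
  rw [show m + 1 + (n - m - 1 - i) = n - i by omega, Nat.cast_sub (by omega)]
  ring

theorem prod_fin_erase_add_eq_gbinom (c : ℝ) {n : ℕ} (m : Fin (n + 1)) :
    ∏ k ∈ univ.erase m, (c + (k : ℕ)) =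
      gbinom (c + m - 1) m * m ! * (gbinom (c + n) (n - m) * (n - m)!) := by
  rw [← prod_range_add_eq_gbinom, ← prod_Ioc_add_eq_gbinom c m.is_le,
    ← prod_range_succ_erase_eq_mul_prod_Ioc _ m.is_le, ← Nat.Iio_eq_range,
    ← Fin.map_valEmbedding_univ,
    show (m : ℕ) = Fin.valEmbedding m from rfl, ← map_erase, prod_map]
  rfl

theorem gbinom_natCast_self (k : ℕ) : gbinom k k = 1 := by
  have h := prod_range_add_eq_gbinom 1 k
  rw [add_sub_cancel_left, prod_range_one_add_natCast, eq_comm,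
    mul_eq_right₀ (by positivity)] at h
  exact h

theorem gbinom_neg_one (k : ℕ) : gbinom (-1) k = (-1) ^ k := by
  have h := gbinom_mul_factorial (-1) k
  rw [show ∏ i ∈ range k, ((-1 : ℝ) - i) = ∏ i ∈ range k, -(1 + (i : ℝ)) from
      prod_congr rfl fun i _ => by ring, prod_neg, card_range, prod_range_one_add_natCast,
    mul_left_inj' (by positivity)] at h
  exact h

theorem prod_fin_erase_natCast_sub {n : ℕ} (j : Fin (n + 1)) :
    ∏ k ∈ univ.erase j, ((k : ℕ) - (j : ℕ) : ℝ) = (-1) ^ (j : ℕ) * (j : ℕ)! * (n - j)! := by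
  simp_rw [sub_eq_neg_add, prod_fin_erase_add_eq_gbinom, neg_add_cancel, zero_sub]
  rw [show -((j : ℕ) : ℝ) + n = ((n - j : ℕ) : ℝ) by rw [Nat.cast_sub j.is_le]; ring,
    gbinom_neg_one, gbinom_natCast_self]
  ring

theorem cauchyInv_natCast_neg_apply (α : ℝ) {n : ℕ} (j m : Fin (n + 1)) :
    cauchyInv (fun i : Fin (n + 1) => ((i : ℕ) : ℝ)) (fun k => -((k : ℕ) + α)) j m =
      (-1) ^ ((j : ℕ) + (m : ℕ)) * ((j : ℕ) + (m : ℕ) + α) *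
        gbinom (n + (j : ℕ) + α) (n - (m : ℕ)) * gbinom (n + (m : ℕ) + α) (n - (j : ℕ)) *
        gbinom ((j : ℕ) + (m : ℕ) + α - 1) (j : ℕ) *
        gbinom ((j : ℕ) + (m : ℕ) + α - 1) (m : ℕ) := by
  have hA : ∏ i ∈ univ.erase m, (-((j : ℕ) + α) - (i : ℕ)) = (-1) ^ n *
      (gbinom ((j : ℕ) + (m : ℕ) + α - 1) m * (m : ℕ)! *
        (gbinom (n + (j : ℕ) + α) (n - m) * (n - m)!)) := by
    simp_rw [← neg_add', prod_fin_erase_neg, prod_fin_erase_add_eq_gbinom]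
    ring_nf
  have hB : ∏ k : Fin (n + 1), ((m : ℕ) - -((k : ℕ) + α)) = ((j : ℕ) + (m : ℕ) + α) *
      (gbinom ((j : ℕ) + (m : ℕ) + α - 1) j * (j : ℕ)! *
        (gbinom (n + (m : ℕ) + α) (n - j) * (n - j)!)) := by
    rw [← mul_prod_erase univ _ (mem_univ j)]
    simp_rw [sub_neg_eq_add, ← add_assoc, add_right_comm _ _ α, prod_fin_erase_add_eq_gbinom]
    ring_nf
  have hD : ∏ i ∈ univ.erase m, (((m : ℕ) : ℝ) - (i : ℕ)) =
      (-1) ^ n * ((-1) ^ (m : ℕ) * (m : ℕ)! * (n - m)!) := by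
    rw [← prod_fin_erase_natCast_sub, ← prod_fin_erase_neg]
    simp_rw [neg_sub]
  have hC : ∏ k ∈ univ.erase j, (-((j : ℕ) + α) - -((k : ℕ) + α)) =
      (-1) ^ (j : ℕ) * (j : ℕ)! * (n - j)! := by
    rw [← prod_fin_erase_natCast_sub]
    exact prod_congr rfl fun _ _ => by ring
  have hsign : (-1 : ℝ) ^ (j : ℕ) * ((-1) ^ (m : ℕ) * (-1) ^ ((j : ℕ) + (m : ℕ))) = 1 := by
    rw [← pow_add, ← pow_add]
    exact Even.neg_one_pow ⟨j + m, by ring⟩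
  rw [cauchyInv, of_apply, hA, hB, hC, hD]
  field_simp
  conv_rhs => rw [mul_assoc, mul_assoc, hsign, mul_one]

theorem inverse_generalized_Hilbert (n : ℕ) (α : ℝ) (hα : 0 < α)
    (H B : Matrix (Fin (n + 1)) (Fin (n + 1)) ℝ)
    (hH : ∀ l j : Fin (n + 1), H l j = α / ((l : ℕ) + (j : ℕ) + α))
    (hB : ∀ l j : Fin (n + 1), B l j =
      (-1 : ℝ) ^ ((l : ℕ) + (j : ℕ)) * (((l : ℕ) + (j : ℕ) + α) / α) *
        gbinom (n + (l : ℕ) + α) (n - (j : ℕ)) * gbinom (n + (j : ℕ) + α) (n - (l : ℕ)) *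
        gbinom ((l : ℕ) + (j : ℕ) + α - 1) (l : ℕ) *
        gbinom ((l : ℕ) + (j : ℕ) + α - 1) (j : ℕ)) :
    H * B = 1 ∧ B * H = 1 := by
  set x : Fin (n + 1) → ℝ := fun i => (i : ℕ)
  set y : Fin (n + 1) → ℝ := fun k => -((k : ℕ) + α)
  have hx : Function.Injective x := Nat.cast_injective.comp Fin.val_injective
  have hy : Function.Injective y := fun a b h => hx (add_right_cancel (neg_injective h))
  have hxy : ∀ l j, x l ≠ y j := fun l j h => by
    have : (0 : ℝ) < (l : ℕ) + (j : ℕ) + α := by positivity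
    simp only [x, y] at h
    linarith
  have hHC : H = α • cauchyMatrix x y := by
    ext l j
    rw [hH, Matrix.smul_apply, cauchyMatrix, of_apply, smul_eq_mul, div_eq_mul_inv, sub_neg_eq_add,
      add_assoc]
  have hBC : B = α⁻¹ • cauchyInv x y := by
    ext l j
    rw [hB, Matrix.smul_apply, cauchyInv_natCast_neg_apply, smul_eq_mul]
    ring
  have hHB : H * B = 1 := by
    rw [hHC, hBC, smul_mul_smul_comm, mul_inv_cancel₀ hα.ne', one_smul,
      cauchyMatrix_mul_cauchyInv hx hy hxy]
  exact ⟨hHB, mul_eq_one_comm.mp hHB⟩
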